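/- arXiv:2110.14478 — 3 statements merged into one kernel-verified Lean document; each statement's English description precedes it below -/
import Mathlib

section
/- Let H : ℕ → ℕ be a strictly increasing sequence of positive integers and m ≥ 1. Then there exists a unique γ ∈ (0,1) with ∑_{i≥m} γ^{H_i} = 1. -/
/-!
Write `f x = ∑' i, x ^ e i` for an injective exponent sequence `e` of positive integers
(here `e i = H (m + i)`). On `[0, 1)` the series is dominated by the geometric series, so `f` is
continuous there, and it is strictly increasing because every term is. Since `f 0 = 0` while
already the two terms `x ^ e 0 + x ^ e 1` tend to `2` as `x → 1⁻`, the intermediate value theorem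
yields a root of `f x = 1` in `(0, 1)`, which is unique by monotonicity.
-/

open Set Filter Topology

namespace TsumPow

variable {e : ℕ → ℕ}

theorem summable (he : e.Injective) {x : ℝ} (hx0 : 0 ≤ x) (hx1 : x < 1) :
    Summable fun i => x ^ e i :=
  (summable_geometric_of_lt_one hx0 hx1).comp_injective he

theorem continuousOn (he : e.Injective) {r : ℝ} (hr0 : 0 ≤ r) (hr1 : r < 1) :
    ContinuousOn (fun x : ℝ => ∑' i, x ^ e i) (Icc 0 r) := by
  refine continuousOn_tsum (fun i => (continuous_pow _).continuousOn) (summable he hr0 hr1)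
    fun i x hx => ?_
  rw [Real.norm_eq_abs, abs_of_nonneg (pow_nonneg hx.1 _)]
  exact pow_le_pow_left₀ hx.1 hx.2 _

theorem strictMonoOn (he : e.Injective) {k : ℕ} (hk : e k ≠ 0) :
    StrictMonoOn (fun x : ℝ => ∑' i, x ^ e i) (Ico 0 1) := by
  intro a ha b hb hab
  exact Summable.tsum_lt_tsum (fun i => pow_le_pow_left₀ ha.1 hab.le _)
    (pow_lt_pow_left₀ hab ha.1 hk) (summable he ha.1 ha.2) (summable he hb.1 hb.2)

theorem eq_zero_at_zero (hpos : ∀ i, e i ≠ 0) : ∑' i, (0 : ℝ) ^ e i = 0 := by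
  simp [zero_pow, hpos]

theorem exists_one_lt (he : e.Injective) : ∃ r ∈ Ioo (0 : ℝ) 1, 1 < ∑' i, r ^ e i := by
  have hpair : Tendsto (fun x : ℝ => x ^ e 0 + x ^ e 1) (𝓝[<] 1) (𝓝 2) := by
    refine (((continuous_pow _).add (continuous_pow _)).tendsto' 1 2 ?_).mono_left
      nhdsWithin_le_nhds
    norm_num
  obtain ⟨r, hr1, hr⟩ :=
    ((hpair.eventually (lt_mem_nhds one_lt_two)).and (Ioo_mem_nhdsLT zero_lt_one)).exists
  refine ⟨r, hr, hr1.trans_le ?_⟩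
  have hsum := (summable he hr.1.le hr.2).sum_le_tsum {0, 1} fun i _ => pow_nonneg hr.1.le _
  rwa [Finset.sum_pair zero_ne_one] at hsum

theorem existsUnique_eq_one (he : e.Injective) (hpos : ∀ i, e i ≠ 0) :
    ∃! γ : ℝ, γ ∈ Ioo 0 1 ∧ ∑' i, γ ^ e i = 1 := by
  obtain ⟨r, hr, hfr⟩ := exists_one_lt he
  obtain ⟨c, hc, hfc⟩ := intermediate_value_Ioo hr.1.le (continuousOn he hr.1.le hr.2)
    ⟨by simp only [eq_zero_at_zero hpos, zero_lt_one], hfr⟩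
  have hc1 : c < 1 := hc.2.trans hr.2
  refine ⟨c, ⟨⟨hc.1, hc1⟩, hfc⟩, fun y hy => ?_⟩
  exact (strictMonoOn he (hpos 0)).injOn ⟨hy.1.1.le, hy.1.2⟩ ⟨hc.1.le, hc1⟩ (hy.2.trans hfc.symm)

end TsumPow

theorem exists_unique_root_general (H : ℕ → ℕ) (hmono : StrictMono H) (hpos : ∀ i, 1 ≤ H i)
    (m : ℕ) :
    ∃! γ : ℝ, γ ∈ Set.Ioo (0 : ℝ) 1 ∧ ∑' i : ℕ, γ ^ H (m + i) = 1 :=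
  TsumPow.existsUnique_eq_one (hmono.injective.comp (add_right_injective m))
    fun i => Nat.one_le_iff_ne_zero.mp (hpos (m + i))

theorem exists_unique_root (H : ℕ → ℕ) (hmono : StrictMono H) (hpos : ∀ i, 1 ≤ H i)
    (m : ℕ) (hm : 1 ≤ m) :
    ∃! γ : ℝ, γ ∈ Set.Ioo (0 : ℝ) 1 ∧ ∑' i : ℕ, γ ^ H (m + i) = 1 :=
  exists_unique_root_general H hmono hpos m
end

section
/- Let H : ℕ → ℕ be strictly increasing with positive values, and for each m let γ_m ∈ (0,1) be the unique root of ∑_{i≥m} x^{H_i} = 1. Then the sequence (γ_m) is strictly increasing. -/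
section PowerSeriesAlongStrictMono

variable {f : ℕ → ℕ} {x y : ℝ}

theorem summable_pow_of_strictMono (hf : StrictMono f) (hx₀ : 0 ≤ x) (hx₁ : x < 1) :
    Summable fun i => x ^ f i :=
  (summable_geometric_of_lt_one hx₀ hx₁).of_nonneg_of_le (fun _ => by positivity)
    fun i => pow_le_pow_of_le_one hx₀ hx₁.le (hf.id_le i)

theorem tsum_pow_le_tsum_pow (hf : StrictMono f) (hx₀ : 0 ≤ x) (hxy : x ≤ y) (hy₁ : y < 1) :
    ∑' i, x ^ f i ≤ ∑' i, y ^ f i :=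
  Summable.tsum_le_tsum (fun _ => pow_le_pow_left₀ hx₀ hxy _)
    (summable_pow_of_strictMono hf hx₀ (hxy.trans_lt hy₁))
    (summable_pow_of_strictMono hf (hx₀.trans hxy) hy₁)

theorem tsum_pow_succ_lt_tsum_pow (hf : StrictMono f) (hx₀ : 0 < x) (hx₁ : x < 1) :
    ∑' i, x ^ f (i + 1) < ∑' i, x ^ f i := by
  rw [(summable_pow_of_strictMono hf hx₀.le hx₁).tsum_eq_zero_add]
  exact lt_add_of_pos_left _ (by positivity)

end PowerSeriesAlongStrictMono

theorem roots_strictMono_general (H : ℕ → ℕ) (hmono : StrictMono H)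
    (γ : ℕ → ℝ) (hγ : ∀ m, γ m ∈ Set.Ioo (0 : ℝ) 1 ∧ ∑' i : ℕ, (γ m) ^ H (m + i) = 1) :
    StrictMono γ := by
  refine strictMono_nat_of_lt_succ fun m => ?_
  obtain ⟨⟨hγ₀, hγ₁⟩, hsum⟩ := hγ m
  obtain ⟨⟨hγ₀', -⟩, hsum'⟩ := hγ (m + 1)
  simp_rw [add_right_comm m 1, add_assoc] at hsum'
  have hshift : StrictMono fun i => H (m + i) := hmono.comp (strictMono_id.const_add m)
  by_contra! hle
  have := calc
    (1 : ℝ) = ∑' i, γ (m + 1) ^ H (m + (i + 1)) := hsum'.symm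
    _ ≤ ∑' i, γ m ^ H (m + (i + 1)) :=
      tsum_pow_le_tsum_pow (hshift.comp (strictMono_id.add_const 1)) hγ₀'.le hle hγ₁
    _ < ∑' i, γ m ^ H (m + i) := tsum_pow_succ_lt_tsum_pow hshift hγ₀ hγ₁
    _ = 1 := hsum
  exact lt_irrefl _ this

theorem roots_strictMono (H : ℕ → ℕ) (hmono : StrictMono H) (hpos : ∀ i, 1 ≤ H i)
    (γ : ℕ → ℝ) (hγ : ∀ m, γ m ∈ Set.Ioo (0 : ℝ) 1 ∧ ∑' i : ℕ, (γ m) ^ H (m + i) = 1) :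
    StrictMono γ :=
  roots_strictMono_general H hmono γ hγ
end

section
/- Let H : ℕ → ℕ be strictly increasing with positive values, and for each m let γ_m ∈ (0,1) be the unique root of ∑_{i≥m} x^{H_i} = 1. Then γ_m → 1 as m → ∞. -/
theorem roots_tendsto_one (H : ℕ → ℕ) (hmono : StrictMono H) (hpos : ∀ i, 1 ≤ H i)
    (γ : ℕ → ℝ) (hγ : ∀ m, γ m ∈ Set.Ioo (0 : ℝ) 1 ∧ ∑' i : ℕ, (γ m) ^ H (m + i) = 1) :
    Filter.Tendsto γ Filter.atTop (nhds 1) := by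
  rw [Metric.tendsto_atTop]
  intro ε hε
  set x : ℝ := max (1 - ε) (1/2) with hx
  have hx0 : 0 < x := lt_of_lt_of_le (by norm_num) (le_max_right _ _)
  have hx1 : x < 1 := max_lt (by linarith) (by norm_num)
  have hpow : Filter.Tendsto (fun m => x ^ m) Filter.atTop (nhds 0) :=
    tendsto_pow_atTop_nhds_zero_of_lt_one hx0.le hx1
  obtain ⟨N, hN⟩ := (Metric.tendsto_atTop.mp hpow) (1 - x) (by linarith)
  refine ⟨N, fun m hm => ?_⟩
  have hxm : x ^ m < 1 - x := by
    have := hN m hm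
    rwa [Real.dist_eq, sub_zero, abs_of_pos (pow_pos hx0 m)] at this
  have hsum_geo : Summable (fun i : ℕ => x ^ (m + i)) := by
    simpa [pow_add] using (summable_geometric_of_lt_one hx0.le hx1).mul_left (x ^ m)
  have hle_exp : ∀ i : ℕ, m + i ≤ H (m + i) := fun i => hmono.le_apply
  have hsum_x : Summable (fun i : ℕ => x ^ H (m + i)) := by
    apply Summable.of_nonneg_of_le (fun i => by positivity) (fun i => ?_) hsum_geo
    exact pow_le_pow_of_le_one hx0.le hx1.le (hle_exp i)
  have htsum_x : ∑' i : ℕ, x ^ H (m + i) < 1 := by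
    have h1 : ∑' i : ℕ, x ^ H (m + i) ≤ ∑' i : ℕ, x ^ (m + i) :=
      Summable.tsum_le_tsum (fun i => pow_le_pow_of_le_one hx0.le hx1.le (hle_exp i)) hsum_x hsum_geo
    have h2 : ∑' i : ℕ, x ^ (m + i) = x ^ m * (1 - x)⁻¹ := by
      simp [pow_add, tsum_mul_left, tsum_geometric_of_lt_one hx0.le hx1]
    have h3 : x ^ m * (1 - x)⁻¹ < 1 := by
      rw [mul_inv_lt_iff₀ (by linarith)]
      linarith
    linarith
  obtain ⟨⟨hγ0, hγ1⟩, hγsum⟩ := hγ m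
  have hgx : x < γ m := by
    by_contra h
    push_neg at h
    have hsum_γ : Summable (fun i : ℕ => (γ m) ^ H (m + i)) := by
      by_contra hns
      rw [tsum_eq_zero_of_not_summable hns] at hγsum
      norm_num at hγsum
    have : (1:ℝ) ≤ ∑' i : ℕ, x ^ H (m + i) := by
      rw [← hγsum]
      exact Summable.tsum_le_tsum (fun i => pow_le_pow_left₀ hγ0.le h _) hsum_γ hsum_x
    linarith
  rw [Real.dist_eq, abs_of_neg (by linarith)]
  have : 1 - ε ≤ x := le_max_left _ _
  linarith
end
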